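/- arXiv:1007.2769 — 2 statements merged into one kernel-verified Lean document; each statement's English description precedes it below -/
import Mathlib

section
/- Fix m ≥ 1 and p_0, p_1 ∈ ℕ with p_0 + p_1 = m, and let c = {v ∈ I(2,2m) : |v| is fixed-point-free and #{i : z_i(v) = 0} = 2p_0} (the S_{2m}-conjugacy class c_{0,0,p_0,p_1} of involutions of B_{2m} with no fixed points). Then for every g ∈ B_{2m}: Σ_{v ∈ c, |g|v|g|⁻¹ = v} (−1)^{⟨g,v⟩ + inv_v(g)} = (−1)^{inv(|g|)} · Σ_{v ∈ c, |g|v|g|⁻¹ = v} (−1)^{⟨g,v⟩}. (This is the identity of characters expressing that the representation ϱ of B_{2m} on the span of {C_v : v ∈ c} is isomorphic to the tensor product of the linear character g ↦ (−1)^{inv(|g|)} with the representation φ on the same span.) -/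
/-!
If `|g|` commutes with the fixed-point-free involution `τ = |v|`, it permutes the `τ`-pairs
`{i, τ i}`. Indexing `Fin (2m)` by (pair, position in the pair), `|g|` becomes a swap inside each
pair that `|g|` reverses, followed by a permutation `π` of the pairs acting diagonally. The
diagonal factor has sign `sign(π)² = 1`, so `sign |g| = (-1)^{inv_v(g)}`; since also
`sign |g| = (-1)^{inv(|g|)}`, the two sums agree term by term.
-/

noncomputable section

/-- The wreath product `G(r,n) = C_r ≀ S_n`, realized as pairs of a color vector
`z : Fin n → ZMod r` and a permutation `p` of `Fin n`. -/
@[ext] structure WreathG (r n : ℕ) where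
  z : Fin n → ZMod r
  p : Equiv.Perm (Fin n)

namespace WreathG

variable {r n : ℕ}

instance : One (WreathG r n) := ⟨⟨0, 1⟩⟩
instance : Mul (WreathG r n) := ⟨fun g h => ⟨g.z + h.z ∘ g.p.symm, g.p * h.p⟩⟩
instance : Inv (WreathG r n) := ⟨fun g => ⟨-(g.z ∘ g.p), g.p⁻¹⟩⟩

@[simp] theorem one_z : (1 : WreathG r n).z = 0 := rfl
@[simp] theorem one_p : (1 : WreathG r n).p = 1 := rfl
@[simp] theorem mul_z (a b : WreathG r n) : (a * b).z = a.z + b.z ∘ a.p.symm := rfl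
@[simp] theorem mul_p (a b : WreathG r n) : (a * b).p = a.p * b.p := rfl
@[simp] theorem inv_z (a : WreathG r n) : (a⁻¹).z = -(a.z ∘ a.p) := rfl
@[simp] theorem inv_p (a : WreathG r n) : (a⁻¹).p = a.p⁻¹ := rfl

instance : Group (WreathG r n) :=
  Group.ofLeftAxioms
    (fun a b c => by
      refine WreathG.ext ?_ (mul_assoc a.p b.p c.p)
      funext x
      show (a.z x + b.z (a.p.symm x)) + c.z ((a.p * b.p).symm x)
          = a.z x + (b.z (a.p.symm x) + c.z (b.p.symm (a.p.symm x)))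
      have h : (a.p * b.p).symm x = b.p.symm (a.p.symm x) := rfl
      rw [h, add_assoc])
    (fun a => by
      refine WreathG.ext ?_ (one_mul a.p)
      funext x
      show 0 + a.z ((1 : Equiv.Perm (Fin n)).symm x) = a.z x
      simp
      rfl)
    (fun a => by
      refine WreathG.ext ?_ (inv_mul_cancel a.p)
      funext x
      show -(a.z (a.p x)) + a.z ((a.p⁻¹).symm x) = 0
      have h : (a.p⁻¹).symm x = a.p x := rfl
      rw [h, neg_add_cancel])

/-- An absolute involution of `G(r,n)`: `|v|² = 1` and `z ∘ |v| = z`. -/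
def IsAbsInv (v : WreathG r n) : Prop := v.p ^ 2 = 1 ∧ v.z ∘ v.p = v.z

instance (v : WreathG r n) : Decidable (IsAbsInv v) :=
  inferInstanceAs (Decidable (_ ∧ _))

/-- Absolute conjugation `τ·(z,σ)·τ⁻¹ = (z ∘ τ⁻¹, τστ⁻¹)`. -/
def aconj (τ : Equiv.Perm (Fin n)) (v : WreathG r n) : WreathG r n :=
  ⟨v.z ∘ τ.symm, τ * v.p * τ⁻¹⟩

theorem IsAbsInv.aconj {v : WreathG r n} (h : IsAbsInv v) (τ : Equiv.Perm (Fin n)) :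
    IsAbsInv (WreathG.aconj τ v) := by
  obtain ⟨h1, h2⟩ := h
  constructor
  · show (τ * v.p * τ⁻¹) ^ 2 = 1
    have key : (τ * v.p * τ⁻¹) * (τ * v.p * τ⁻¹) = τ * (v.p * v.p) * τ⁻¹ := by
      simp [mul_assoc]
    rw [sq, key, ← sq, h1, mul_one, mul_inv_cancel]
  · funext x
    have := congrFun h2 (τ.symm x)
    simpa [WreathG.aconj, Function.comp] using this

/-- `⟨g,v⟩ = ∑ i z_i(g)·z_i(v) ∈ ZMod r`. -/
def pairing (g v : WreathG r n) : ZMod r := ∑ i, g.z i * v.z i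

/-- `inv_v(g)`: the number of pairs `i < j` with `|v|(i) = j` and `|g|(i) > |g|(j)`. -/
def invv (v g : WreathG r n) : ℕ :=
  Nat.card {q : Fin n × Fin n // q.1 < q.2 ∧ v.p q.1 = q.2 ∧ g.p q.2 < g.p q.1}

/-- The number of inversions of a permutation. -/
def invPerm (σ : Equiv.Perm (Fin n)) : ℕ :=
  Nat.card {q : Fin n × Fin n // q.1 < q.2 ∧ σ q.2 < σ q.1}

/-- `fix_i(v)`: the number of `j` with `|v|(j) = j` and `z_j(v) = i`. -/
def fixc (v : WreathG r n) (i : ZMod r) : ℕ :=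
  Nat.card {j : Fin n // v.p j = j ∧ v.z j = i}

/-- `pair_i(v)`: the number of pairs `j < k` with `|v|(j) = k` and `z_j(v) = z_k(v) = i`. -/
def pairc (v : WreathG r n) (i : ZMod r) : ℕ :=
  Nat.card {q : Fin n × Fin n // q.1 < q.2 ∧ v.p q.1 = q.2 ∧ v.z q.1 = i ∧ v.z q.2 = i}

instance : DecidableEq (WreathG r n) := fun a b =>
  decidable_of_iff (a.z = b.z ∧ a.p = b.p)
    (by constructor
        · rintro ⟨h1, h2⟩; exact WreathG.ext h1 h2
        · rintro rfl; exact ⟨rfl, rfl⟩)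

instance [NeZero r] : Fintype (WreathG r n) :=
  Fintype.ofEquiv ((Fin n → ZMod r) × Equiv.Perm (Fin n))
    { toFun := fun x => ⟨x.1, x.2⟩
      invFun := fun g => (g.z, g.p)
      left_inv := fun _ => rfl
      right_inv := fun _ => rfl }

end WreathG

/-- The set `I(r,n)` of absolute involutions, as a subtype. -/
abbrev AbsInv (r n : ℕ) := {v : WreathG r n // WreathG.IsAbsInv v}

/-- The model space `M`: the complex vector space with basis `{C_v : v ∈ I(r,n)}`. -/
abbrev ModelSpace (r n : ℕ) := AbsInv r n →₀ ℂ

/-- `ζ_r = exp(2πi/r)`. -/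
def zetaC (r : ℕ) : ℂ := Complex.exp (2 * Real.pi * Complex.I / r)

/-- `ζ_r` raised to an exponent in `ZMod r` (well defined since `ζ_r^r = 1`). -/
def zetaPow (r : ℕ) (a : ZMod r) : ℂ := zetaC r ^ a.val

/-- The Gelfand model operator `ϱ(g) C_v = ζ_r^{⟨g,v⟩} (−1)^{inv_v(g)} C_{|g|v|g|⁻¹}`. -/
def modelRho {r n : ℕ} (g : WreathG r n) :
    ModelSpace r n →ₗ[ℂ] ModelSpace r n :=
  Finsupp.lsum ℂ fun v =>
    ((zetaPow r (WreathG.pairing g v.1) * (-1 : ℂ) ^ WreathG.invv v.1 g) •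
      Finsupp.lsingle (⟨WreathG.aconj g.p v.1, v.2.aconj g.p⟩ : AbsInv r n))

/-- The auxiliary operator `φ(g) C_v = ζ_r^{⟨g,v⟩} C_{|g|v|g|⁻¹}`. -/
def modelPhi {r n : ℕ} (g : WreathG r n) :
    ModelSpace r n →ₗ[ℂ] ModelSpace r n :=
  Finsupp.lsum ℂ fun v =>
    ((zetaPow r (WreathG.pairing g v.1)) •
      Finsupp.lsingle (⟨WreathG.aconj g.p v.1, v.2.aconj g.p⟩ : AbsInv r n))

/-- `(−1)` raised to an exponent in `ZMod 2`. -/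
def negOnePow2 (a : ZMod 2) : ℂ := (-1 : ℂ) ^ a.val

/-- The Gelfand model operator for `B_n = G(2,n)`:
`ϱ(g) C_v = (−1)^{⟨g,v⟩} (−1)^{inv_v(g)} C_{|g|v|g|⁻¹}`. -/
def modelRho2 {n : ℕ} (g : WreathG 2 n) : ModelSpace 2 n →ₗ[ℂ] ModelSpace 2 n :=
  Finsupp.lsum ℂ fun v =>
    ((negOnePow2 (WreathG.pairing g v.1) * (-1 : ℂ) ^ WreathG.invv v.1 g) •
      Finsupp.lsingle (⟨WreathG.aconj g.p v.1, v.2.aconj g.p⟩ : AbsInv 2 n))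

/-- The auxiliary operator for `B_n = G(2,n)`: `φ(g) C_v = (−1)^{⟨g,v⟩} C_{|g|v|g|⁻¹}`. -/
def modelPhi2 {n : ℕ} (g : WreathG 2 n) : ModelSpace 2 n →ₗ[ℂ] ModelSpace 2 n :=
  Finsupp.lsum ℂ fun v =>
    ((negOnePow2 (WreathG.pairing g v.1)) •
      Finsupp.lsingle (⟨WreathG.aconj g.p v.1, v.2.aconj g.p⟩ : AbsInv 2 n))

open Equiv Finset

namespace Equiv.Perm

theorem apply_apply_of_commute {α : Type*} {σ τ : Perm α} (h : Commute σ τ) (i : α) :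
    σ (τ i) = τ (σ i) :=
  DFunLike.congr_fun h.eq i

variable {α : Type*} [LinearOrder α]

def pairingEquiv (τ : Perm α) (hτ : Function.Involutive τ) (hfree : ∀ i, τ i ≠ i) :
    α ≃ {i // i < τ i} × Fin 2 where
  toFun i :=
    if h : i < τ i then (⟨i, h⟩, 0)
    else (⟨τ i, by rw [hτ i]; exact lt_of_le_of_ne (not_lt.1 h) (hfree i)⟩, 1)
  invFun p := if p.2 = 0 then p.1 else τ p.1
  left_inv i := by by_cases h : i < τ i <;> simp [h, hτ i]
  right_inv := by
    rintro ⟨⟨i, hi⟩, ε⟩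
    fin_cases ε
    · simp [hi]
    · simp [hτ i, not_lt.2 hi.le]

section pairing

variable {τ : Perm α} (hτ : Function.Involutive τ) (hfree : ∀ i, τ i ≠ i)

theorem coe_fst_pairingEquiv (i : α) :
    ((pairingEquiv τ hτ hfree i).1 : α) = min i (τ i) := by
  by_cases h : i < τ i
  · simp [pairingEquiv, h, h.le]
  · simp [pairingEquiv, h, not_lt.1 h]

theorem snd_pairingEquiv (i : α) :
    (pairingEquiv τ hτ hfree i).2 = if i < τ i then 0 else 1 := by
  by_cases h : i < τ i <;> simp [pairingEquiv, h]

theorem fst_pairingEquiv_apply_self (i : α) :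
    (pairingEquiv τ hτ hfree (τ i)).1 = (pairingEquiv τ hτ hfree i).1 :=
  Subtype.ext <| by simp only [coe_fst_pairingEquiv, hτ i, min_comm]

theorem fst_pairingEquiv_coe (k : {i // i < τ i}) :
    (pairingEquiv τ hτ hfree k).1 = k :=
  Subtype.ext <| by simp [coe_fst_pairingEquiv, k.2.le]

theorem pairingEquiv_symm_apply_zero (k : {i // i < τ i}) :
    (pairingEquiv τ hτ hfree).symm (k, 0) = k := rfl

theorem pairingEquiv_symm_apply_one (k : {i // i < τ i}) :
    (pairingEquiv τ hτ hfree).symm (k, 1) = τ k := rfl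

theorem fst_pairingEquiv_apply_fst_pairingEquiv {σ : Perm α} (hσ : Commute σ τ) (i : α) :
    (pairingEquiv τ hτ hfree (σ (pairingEquiv τ hτ hfree i).1)).1 =
      (pairingEquiv τ hτ hfree (σ i)).1 := by
  rcases min_choice i (τ i) with h | h <;> rw [coe_fst_pairingEquiv, h]
  rw [apply_apply_of_commute hσ, fst_pairingEquiv_apply_self]

def blockPerm {σ : Perm α} (hσ : Commute σ τ) : Perm {i // i < τ i} where
  toFun k := (pairingEquiv τ hτ hfree (σ k)).1
  invFun k := (pairingEquiv τ hτ hfree (σ⁻¹ k)).1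
  left_inv k := by
    dsimp only
    rw [fst_pairingEquiv_apply_fst_pairingEquiv hτ hfree hσ.inv_left, ← Perm.mul_apply,
      inv_mul_cancel, one_apply, fst_pairingEquiv_coe]
  right_inv k := by
    dsimp only
    rw [fst_pairingEquiv_apply_fst_pairingEquiv hτ hfree hσ, ← Perm.mul_apply,
      mul_inv_cancel, one_apply, fst_pairingEquiv_coe]

theorem permCongr_pairingEquiv {σ : Perm α} (hσ : Commute σ τ) :
    (pairingEquiv τ hτ hfree).permCongr σ =
      prodCongrLeft (fun _ => blockPerm hτ hfree hσ) *
        prodCongrRight fun k : {i // i < τ i} => if σ (τ k) < σ k then swap 0 1 else 1 := by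
  ext ⟨k, ε⟩ : 1
  have hne : σ k ≠ τ (σ k) := (hfree _).symm
  revert ε
  refine Fin.forall_fin_two.2 ⟨?_, ?_⟩
  · refine Prod.ext rfl ?_
    simp only [permCongr_apply, Perm.mul_apply, prodCongrRight_apply, prodCongrLeft_apply,
      pairingEquiv_symm_apply_zero, snd_pairingEquiv, apply_apply_of_commute hσ]
    rcases hne.lt_or_gt with h | h <;> simp [h, not_lt.2 h.le]
  · refine Prod.ext ?_ ?_
    · simp only [permCongr_apply, Perm.mul_apply, prodCongrRight_apply, prodCongrLeft_apply,
        pairingEquiv_symm_apply_one, apply_apply_of_commute hσ, fst_pairingEquiv_apply_self]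
      rfl
    · simp only [permCongr_apply, Perm.mul_apply, prodCongrRight_apply, prodCongrLeft_apply,
        pairingEquiv_symm_apply_one, snd_pairingEquiv, apply_apply_of_commute hσ, hτ _]
      rcases hne.lt_or_gt with h | h <;> simp [h, not_lt.2 h.le]

end pairing

theorem sign_eq_neg_one_pow_card_reversed_pairs [Fintype α] {τ σ : Perm α}
    (hτ : Function.Involutive τ) (hfree : ∀ i, τ i ≠ i) (hσ : Commute σ τ) :
    sign σ = (-1) ^ #{k : {i // i < τ i} | σ (τ k) < σ k} := by
  rw [← sign_permCongr (pairingEquiv τ hτ hfree), permCongr_pairingEquiv hτ hfree hσ, sign_mul,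
    sign_prodCongrLeft, sign_prodCongrRight, prod_const, card_univ, Fintype.card_fin,
    Int.units_sq, one_mul]
  simp only [apply_ite sign, sign_swap (show (0 : Fin 2) ≠ 1 by decide), sign_one, ← prod_filter,
    prod_const]

theorem sign_eq_neg_one_pow_card_pair_inversions [Fintype α] {τ σ : Perm α}
    (hτ : Function.Involutive τ) (hfree : ∀ i, τ i ≠ i) (hσ : Commute σ τ) :
    sign σ = (-1) ^ Nat.card {q : α × α // q.1 < q.2 ∧ τ q.1 = q.2 ∧ σ q.2 < σ q.1} := by
  let e : {q : α × α // q.1 < q.2 ∧ τ q.1 = q.2 ∧ σ q.2 < σ q.1} ≃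
      {k : {i // i < τ i} // σ (τ k) < σ k} :=
    { toFun q := ⟨⟨q.1.1, by rw [q.2.2.1]; exact q.2.1⟩, (congrArg σ q.2.2.1).trans_lt q.2.2.2⟩
      invFun k := ⟨(k.1, τ k.1), k.1.2, rfl, k.2⟩
      left_inv q := Subtype.ext (Prod.ext rfl q.2.2.1)
      right_inv _ := rfl }
  rw [Nat.card_congr e, Nat.card_eq_fintype_card, Fintype.card_subtype,
    sign_eq_neg_one_pow_card_reversed_pairs hτ hfree hσ]

end Equiv.Perm

namespace WreathG

variable {n : ℕ}

theorem sign_eq_neg_one_pow_invPerm (σ : Perm (Fin n)) :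
    Perm.sign σ = (-1) ^ invPerm σ := by
  rw [Perm.sign_eq_prod_prod_Ioi, invPerm, Nat.card_eq_fintype_card, Fintype.card_subtype,
    ← prod_const, prod_filter, Fintype.prod_prod_type]
  refine prod_congr rfl fun i _ => ?_
  rw [← filter_lt_eq_Ioi, prod_filter]
  refine prod_congr rfl fun j _ => ?_
  by_cases hij : i < j
  · rcases lt_or_gt_of_ne (σ.injective.ne hij.ne) with h | h <;> simp [hij, h, not_lt.2 h.le]
  · simp [hij]

variable {r : ℕ}

theorem IsAbsInv.involutive {v : WreathG r n} (hv : IsAbsInv v) : Function.Involutive v.p :=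
  fun i => by rw [← Perm.mul_apply, ← sq, hv.1, Perm.one_apply]

theorem commute_of_aconj_eq {τ : Perm (Fin n)} {v : WreathG r n} (h : aconj τ v = v) :
    Commute τ v.p :=
  mul_inv_eq_iff_eq_mul.1 (congrArg WreathG.p h)

theorem neg_one_pow_invv_eq_neg_one_pow_invPerm {R : Type*} [Ring R] {v g : WreathG r n}
    (hv : IsAbsInv v) (hfree : ∀ j, v.p j ≠ j) (hg : aconj g.p v = v) :
    (-1 : R) ^ invv v g = (-1) ^ invPerm g.p := by
  have h : (-1 : ℤˣ) ^ invv v g = (-1) ^ invPerm g.p := by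
    rw [← sign_eq_neg_one_pow_invPerm, invv, Perm.sign_eq_neg_one_pow_card_pair_inversions
      hv.involutive hfree (commute_of_aconj_eq hg)]
  simpa using congrArg (fun u : ℤˣ => ((u : ℤ) : R)) h

end WreathG

theorem rho_char_eq_sign_mul_phi_char_B_general (m p₀ : ℕ)
    (g : WreathG 2 (2 * m)) :
    ∑ v ∈ Finset.univ.filter (fun v : AbsInv 2 (2 * m) =>
        (∀ j, v.1.p j ≠ j) ∧
        (Finset.univ.filter fun i => v.1.z i = 0).card = 2 * p₀ ∧
        WreathG.aconj g.p v.1 = v.1),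
      negOnePow2 (WreathG.pairing g v.1) * (-1 : ℂ) ^ WreathG.invv v.1 g
    = (-1 : ℂ) ^ WreathG.invPerm g.p *
      ∑ v ∈ Finset.univ.filter (fun v : AbsInv 2 (2 * m) =>
        (∀ j, v.1.p j ≠ j) ∧
        (Finset.univ.filter fun i => v.1.z i = 0).card = 2 * p₀ ∧
        WreathG.aconj g.p v.1 = v.1),
      negOnePow2 (WreathG.pairing g v.1) := by
  rw [mul_sum]
  refine sum_congr rfl fun v hv => ?_
  obtain ⟨hfree, -, hg⟩ := (mem_filter.1 hv).2
  rw [WreathG.neg_one_pow_invv_eq_neg_one_pow_invPerm v.2 hfree hg, mul_comm]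

/-- On the `S_{2m}`-conjugacy class `c = c_{0,0,p₀,p₁}` of fixed-point-free
involutions of `B_{2m}` with `2p₀` zero-colored entries, the character of `ϱ` equals
`(−1)^{inv(|g|)}` times the character of `φ`. -/
theorem rho_char_eq_sign_mul_phi_char_B (m p₀ p₁ : ℕ) (hm : 1 ≤ m) (hs : p₀ + p₁ = m)
    (g : WreathG 2 (2 * m)) :
    ∑ v ∈ Finset.univ.filter (fun v : AbsInv 2 (2 * m) =>
        (∀ j, v.1.p j ≠ j) ∧
        (Finset.univ.filter fun i => v.1.z i = 0).card = 2 * p₀ ∧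
        WreathG.aconj g.p v.1 = v.1),
      negOnePow2 (WreathG.pairing g v.1) * (-1 : ℂ) ^ WreathG.invv v.1 g
    = (-1 : ℂ) ^ WreathG.invPerm g.p *
      ∑ v ∈ Finset.univ.filter (fun v : AbsInv 2 (2 * m) =>
        (∀ j, v.1.p j ≠ j) ∧
        (Finset.univ.filter fun i => v.1.z i = 0).card = 2 * p₀ ∧
        WreathG.aconj g.p v.1 = v.1),
      negOnePow2 (WreathG.pairing g v.1) :=
  rho_char_eq_sign_mul_phi_char_B_general m p₀ g
end
end

section
/- Fix r ≥ 1, m ≥ 1 and p_0,…,p_{r−1} ∈ ℕ with p_0 + ⋯ + p_{r−1} = m. Let (S_0,…,S_{r−1}) be pairwise disjoint subsets of Fin 2m with union Fin 2m and |S_j| = 2p_j for every j, let Δ_{S_0,…,S_{r−1}} = {v ∈ I(r,2m) : |v| is fixed-point-free and {i : z_i(v) = j} = S_j for every j}, and let C_{S_0,…,S_{r−1}} = Σ_{v ∈ Δ_{S_0,…,S_{r−1}}} C_v ∈ M. If g ∈ G(r,2m) satisfies |g|(S_j) = S_j for every j ∈ {0,…,r−1}, then C_{S_0,…,S_{r−1}}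 is an eigenvector of φ(g): φ(g) C_{S_0,…,S_{r−1}} = ζ_r^{e(g)} C_{S_0,…,S_{r−1}}, where e(g) = Σ_{j=0}^{r−1} j·(Σ_{i ∈ S_j} z_i(g)) ∈ ZMod r. -/
noncomputable section

/-- `Δ_{S_0,…,S_{r−1}}`: the set of absolute involutions of `G(r,2m)` whose underlying
permutation is fixed-point-free and whose set of `j`-colored positions is exactly `S j`. -/
def DeltaT {r m : ℕ} [NeZero r] (S : Fin r → Finset (Fin (2 * m))) :
    Finset (AbsInv r (2 * m)) :=
  Finset.univ.filter fun v =>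
    (∀ j, v.1.p j ≠ j) ∧
    ∀ j : Fin r, (Finset.univ.filter fun i => v.1.z i = (j.val : ZMod r)) = S j

/-- `C_{S_0,…,S_{r−1}} = ∑_{v ∈ Δ_{S_0,…,S_{r−1}}} C_v`. -/
def CT {r m : ℕ} [NeZero r] (S : Fin r → Finset (Fin (2 * m))) : ModelSpace r (2 * m) :=
  ∑ v ∈ DeltaT S, Finsupp.single v 1

/-! Every `v ∈ Δ_S` has colour `j` exactly on `S_j`, so
`⟨g, v⟩ = ∑ j, j · ∑_{i ∈ S_j} z_i(g) = e(g)` does not depend on `v ∈ Δ_S`. Absolute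
conjugation by `|g|` preserves fixed-point-freeness and moves every colour class by `|g|`; as
`|g|` stabilises each `S_j`, it permutes `Δ_S`. Hence `φ(g) C_S` is `ζ_r^{e(g)}` times a
rearrangement of the sum defining `C_S`. -/

theorem sum_fin_natCast_eq_sum_zmod {M : Type*} [AddCommMonoid M] {r : ℕ} [NeZero r]
    (f : ZMod r → M) :
    ∑ j : Fin r, f j.val = ∑ c : ZMod r, f c := by
  obtain ⟨k, rfl⟩ := Nat.exists_eq_succ_of_ne_zero (NeZero.ne r)
  exact Fintype.sum_congr _ _ fun j => congrArg f (ZMod.natCast_zmod_val (n := k + 1) j)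

namespace WreathG

variable {r n : ℕ}

def colorClass (v : WreathG r n) (c : ZMod r) : Finset (Fin n) :=
  Finset.univ.filter fun i => v.z i = c

theorem colorClass_aconj (τ : Equiv.Perm (Fin n)) (v : WreathG r n) (c : ZMod r) :
    (aconj τ v).colorClass c = (v.colorClass c).image τ := by
  ext i
  simp only [colorClass, Finset.mem_image, Finset.mem_filter_univ]
  exact ⟨fun h => ⟨τ.symm i, h, τ.apply_symm_apply i⟩,
    by rintro ⟨a, h, rfl⟩; simpa [aconj] using h⟩

theorem aconj_aconj (σ τ : Equiv.Perm (Fin n)) (v : WreathG r n) :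
    aconj σ (aconj τ v) = aconj (σ * τ) v := by
  ext <;> simp [aconj, Equiv.Perm.mul_def]

theorem aconj_one (v : WreathG r n) : aconj 1 v = v := by
  ext <;> simp [aconj, Equiv.Perm.one_def]

theorem pairing_eq_sum_colorClass [NeZero r] (g v : WreathG r n) :
    pairing g v = ∑ j : Fin r, (j.val : ZMod r) * ∑ i ∈ v.colorClass j.val, g.z i := by
  rw [sum_fin_natCast_eq_sum_zmod (fun c => c * ∑ i ∈ v.colorClass c, g.z i), pairing,
    ← Finset.sum_fiberwise Finset.univ v.z]
  refine Finset.sum_congr rfl fun c _ => ?_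
  rw [Finset.mul_sum]
  refine Finset.sum_congr rfl fun i hi => ?_
  rw [(Finset.mem_filter.mp hi).2, mul_comm]

end WreathG

open WreathG

section

variable {r n : ℕ}

def AbsInv.aconjEquiv (τ : Equiv.Perm (Fin n)) : AbsInv r n ≃ AbsInv r n where
  toFun v := ⟨aconj τ v.1, v.2.aconj τ⟩
  invFun v := ⟨aconj τ⁻¹ v.1, v.2.aconj τ⁻¹⟩
  left_inv v := Subtype.ext <| by simp [aconj_aconj, aconj_one]
  right_inv v := Subtype.ext <| by simp [aconj_aconj, aconj_one]

theorem modelPhi_single (g : WreathG r n) (v : AbsInv r n) :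
    modelPhi g (Finsupp.single v 1) =
      zetaPow r (pairing g v.1) • Finsupp.single (AbsInv.aconjEquiv g.p v) 1 := by
  rw [modelPhi, Finsupp.lsum_single, LinearMap.smul_apply, Finsupp.lsingle_apply]
  rfl

theorem mem_DeltaT_iff {m : ℕ} [NeZero r] {S : Fin r → Finset (Fin (2 * m))}
    {v : AbsInv r (2 * m)} :
    v ∈ DeltaT S ↔ (∀ j, v.1.p j ≠ j) ∧ ∀ j : Fin r, v.1.colorClass j.val = S j := by
  simp [DeltaT, colorClass]

theorem aconjEquiv_mem_DeltaT_iff {m : ℕ} [NeZero r] {S : Fin r → Finset (Fin (2 * m))}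
    {τ : Equiv.Perm (Fin (2 * m))} (hτ : ∀ j, (S j).image τ = S j) {v : AbsInv r (2 * m)} :
    AbsInv.aconjEquiv τ v ∈ DeltaT S ↔ v ∈ DeltaT S := by
  rw [mem_DeltaT_iff, mem_DeltaT_iff]
  refine and_congr ?_ (forall_congr' fun j => ?_)
  · exact τ.symm.forall_congr fun {j} => by
      simp [AbsInv.aconjEquiv, aconj, Equiv.Perm.inv_def, ← Equiv.eq_symm_apply]
  · rw [AbsInv.aconjEquiv, Equiv.coe_fn_mk, colorClass_aconj]
    exact (Finset.image_injective τ.injective).eq_iff' (hτ j)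

end

theorem CT_eigenvector_general (r m : ℕ) [NeZero r]
    (S : Fin r → Finset (Fin (2 * m)))
    (g : WreathG r (2 * m)) (hg : ∀ j, (S j).image g.p = S j) :
    modelPhi g (CT S) =
      zetaPow r (∑ j : Fin r, (j.val : ZMod r) * ∑ i ∈ S j, g.z i) • CT S := by
  set e := ∑ j : Fin r, (j.val : ZMod r) * ∑ i ∈ S j, g.z i
  have hpairing : ∀ v ∈ DeltaT S, pairing g v.1 = e := fun v hv => by
    rw [pairing_eq_sum_colorClass]
    exact Finset.sum_congr rfl fun j _ => by rw [(mem_DeltaT_iff.mp hv).2 j]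
  calc modelPhi g (CT S)
      = ∑ v ∈ DeltaT S, zetaPow r e • Finsupp.single (AbsInv.aconjEquiv g.p v) 1 := by
        rw [CT, map_sum]
        exact Finset.sum_congr rfl fun v hv => by rw [modelPhi_single, hpairing v hv]
    _ = zetaPow r e • CT S := by
        rw [← Finset.smul_sum, CT]
        congr 1
        exact Finset.sum_equiv (AbsInv.aconjEquiv g.p)
          (fun _ => (aconjEquiv_mem_DeltaT_iff hg).symm) fun _ _ => rfl

/-- If `|g|` stabilizes each block `S j`, then `C_{S_0,…,S_{r−1}}` is an
eigenvector of `φ(g)` with eigenvalue `ζ_r^{e(g)}`, where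
`e(g) = ∑_j j·(∑_{i ∈ S_j} z_i(g))`. -/
theorem CT_eigenvector (r m : ℕ) [NeZero r] (hm : 1 ≤ m)
    (p : Fin r → ℕ) (hp : ∑ j, p j = m)
    (S : Fin r → Finset (Fin (2 * m)))
    (hdisj : ∀ j k, j ≠ k → Disjoint (S j) (S k))
    (hcover : ∀ i, ∃ j, i ∈ S j)
    (hcard : ∀ j, (S j).card = 2 * p j)
    (g : WreathG r (2 * m)) (hg : ∀ j, (S j).image g.p = S j) :
    modelPhi g (CT S) =
      zetaPow r (∑ j : Fin r, (j.val : ZMod r) * ∑ i ∈ S j, g.z i) • CT S :=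
  CT_eigenvector_general r m S g hg
end
end
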